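/- In ℝ^{p,q} with p,q ≥ 2, for every v ∈ ℝⁿ and every R > 0, each of the sets (v + U_S) \ B(0,R), (v + U_T) \ B(0,R), and H_{w,α} \ B(0,R) (for w isotropic nonzero and α ∈ ℝ) is connected and nonempty, where B(0,R) is the closed Euclidean ball of radius R and U_S = {q > 0}, U_T = {q < 0}, H_{w,α} = {u : b(w,u) > α}. -/

import Mathlib

/-!
Let `K` be the span of the last `q` coordinates and `σ` the reflection in `K`, so that
`b(x, y) = ⟪σ x, y⟫`. Then `{q > 0}` is the cone of vectors whose `K`-component is longer than
their `Kᗮ`-component, and `{q < 0}` is the same cone for `Kᗮ`; both subspaces have dimension `≥ 2`.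

Each of the three sets `X` is path connected. A far-away part of `X` is path connected: the
vectors `v + c` with `c ∈ K` of large norm (a sphere times an interval), resp. a smaller
half-space. Any `y ∈ X` is joined to it by two segments. The first moves `y` along a unit
vector `w` with `⟪y, w⟫ ≥ 0`, orthogonal to the `K`-component of `y - v` (resp. to the normal
of the half-space): this does not decrease `‖y‖` and stays in `X`. The second then shrinks the
`Kᗮ`-component to `0` (resp. moves along the normal), far from the ball.
-/

open scoped InnerProductSpace
open Set Metric

/-- The standard symmetric bilinear form of signature `(p,q)` on Euclidean `ℝⁿ`,
`n = p + q`. -/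
noncomputable def formB (p q : ℕ) (v w : EuclideanSpace ℝ (Fin (p + q))) : ℝ :=
  ∑ i : Fin (p + q), (if (i : ℕ) < p then -(v i * w i) else v i * w i)

theorem IsPathConnected.of_subset_of_forall_joinedIn {X : Type*} [TopologicalSpace X]
    {F S : Set X} (hF : IsPathConnected F) (hFS : F ⊆ S)
    (h : ∀ y ∈ S, ∃ x ∈ F, JoinedIn S x y) : IsPathConnected S := by
  obtain ⟨x₀, hx₀, hF⟩ := hF
  refine ⟨x₀, hFS hx₀, fun y hy => ?_⟩
  obtain ⟨x, hx, hxy⟩ := h y hy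
  exact ((hF hx).mono hFS).trans hxy

theorem JoinedIn.of_forall_add_smul_mem {E : Type*} [AddCommGroup E] [Module ℝ E]
    [TopologicalSpace E] [ContinuousAdd E] [ContinuousSMul ℝ E] {S : Set E} {x d : E}
    (h : ∀ θ ∈ Icc (0 : ℝ) 1, x + θ • d ∈ S) : JoinedIn S x (x + d) := by
  refine JoinedIn.of_segment_subset ?_
  rw [segment_eq_image']
  rintro _ ⟨θ, hθ, rfl⟩
  simpa using h θ hθ

theorem isPathConnected_compl_closedBall_zero {E : Type*} [NormedAddCommGroup E]
    [NormedSpace ℝ E] (h : 1 < Module.rank ℝ E) {r : ℝ} (hr : 0 ≤ r) :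
    IsPathConnected (closedBall (0 : E) r)ᶜ := by
  have hprod := (isPathConnected_sphere h (0 : E) zero_le_one).prod
    ((convex_Ioi r).isPathConnected nonempty_Ioi)
  convert hprod.image (continuous_snd.smul continuous_fst) using 1
  ext x
  simp only [mem_compl_iff, mem_closedBall_zero_iff, not_le, mem_image, Prod.exists,
    mem_prod, mem_sphere_zero_iff_norm, mem_Ioi]
  constructor
  · intro hx
    have hx0 : ‖x‖ ≠ 0 := (hr.trans_lt hx).ne'
    exact ⟨‖x‖⁻¹ • x, ‖x‖, ⟨by simp [norm_smul, hx0], hx⟩, by simp [smul_smul, hx0]⟩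
  · rintro ⟨u, t, ⟨hu, ht⟩, rfl⟩
    simpa [norm_smul, hu, abs_of_pos (hr.trans_lt ht)] using ht

theorem Submodule.one_lt_rank_of_linearIndependent {R M : Type*} [Ring R] [Nontrivial R]
    [AddCommGroup M] [Module R M] {K : Submodule R M} {x y : M} (hx : x ∈ K) (hy : y ∈ K)
    (h : LinearIndependent R ![x, y]) : 1 < Module.rank R K := by
  have h' : LinearIndependent R ![(⟨x, hx⟩ : K), ⟨y, hy⟩] :=
    LinearIndependent.of_comp K.subtype (by convert h using 1; ext i; fin_cases i <;> rfl)
  exact Cardinal.one_lt_two.trans_le (by simpa using h'.cardinal_lift_le_rank)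

section InnerProductSpace

variable {E : Type*} [NormedAddCommGroup E] [InnerProductSpace ℝ E]

theorem norm_le_norm_add_smul_of_inner_nonneg {x d : E} (h : 0 ≤ ⟪x, d⟫_ℝ) {t : ℝ}
    (ht : 0 ≤ t) : ‖x‖ ≤ ‖x + t • d‖ := by
  refine le_of_sq_le_sq ?_ (norm_nonneg _)
  rw [norm_add_sq_real, real_inner_smul_right]
  nlinarith [mul_nonneg ht h, sq_nonneg ‖t • d‖]

theorem exists_ne_zero_inner_eq_zero (h : 1 < Module.rank ℝ E) (x : E) :
    ∃ w : E, w ≠ 0 ∧ ⟪x, w⟫_ℝ = 0 := by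
  rcases eq_or_ne x 0 with rfl | hx
  · have : Nontrivial E := (rank_pos_iff_nontrivial (R := ℝ)).1 (zero_lt_one.trans h)
    obtain ⟨w, hw⟩ := exists_ne (0 : E)
    exact ⟨w, hw, inner_zero_left w⟩
  obtain ⟨y, hxy⟩ := exists_linearIndependent_pair_of_one_lt_rank h hx
  refine ⟨y - (⟪x, y⟫_ℝ / ⟪x, x⟫_ℝ) • x, fun h0 => ?_, ?_⟩
  · exact one_ne_zero (LinearIndependent.pair_iff.1 hxy (-(⟪x, y⟫_ℝ / ⟪x, x⟫_ℝ)) 1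
      (by rw [← h0]; module)).2
  · rw [inner_sub_right, real_inner_smul_right,
      div_mul_cancel₀ _ (inner_self_ne_zero.2 hx), sub_self]

theorem Submodule.exists_norm_eq_one_inner_eq_zero_inner_nonneg (K : Submodule ℝ E)
    (hK : 1 < Module.rank ℝ K) {x : E} (hx : x ∈ K) (y : E) :
    ∃ w ∈ K, ‖w‖ = 1 ∧ ⟪x, w⟫_ℝ = 0 ∧ 0 ≤ ⟪y, w⟫_ℝ := by
  obtain ⟨w, hw, hxw⟩ := exists_ne_zero_inner_eq_zero hK ⟨x, hx⟩
  have hw' : (w : E) ≠ 0 := by simpa using hw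
  set u : E := ‖(w : E)‖⁻¹ • (w : E)
  have hu : ‖u‖ = 1 := norm_smul_inv_norm hw'
  have hxu : ⟪x, u⟫_ℝ = 0 := by
    rw [Submodule.coe_inner] at hxw
    rw [real_inner_smul_right, hxw, mul_zero]
  have huK : u ∈ K := K.smul_mem _ w.2
  rcases le_total 0 ⟪y, u⟫_ℝ with hyu | hyu
  · exact ⟨u, huK, hu, hxu, hyu⟩
  · exact ⟨-u, K.neg_mem huK, by rw [norm_neg, hu], by rw [inner_neg_right, hxu, neg_zero],
      by rw [inner_neg_right]; linarith⟩

namespace Submodule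

variable (K : Submodule ℝ E) [K.HasOrthogonalProjection]

def dominatingCone : Set E := {z | ‖z - K.starProjection z‖ < ‖K.starProjection z‖}

variable {K}

theorem add_mem_dominatingCone_iff {a b : E} (ha : a ∈ K) (hb : b ∈ Kᗮ) :
    a + b ∈ K.dominatingCone ↔ ‖b‖ < ‖a‖ := by
  have : K.starProjection (a + b) = a := eq_starProjection_of_mem_orthogonal' ha hb rfl
  simp [dominatingCone, this]

theorem inner_reflection_self (x : E) :
    ⟪K.reflection x, x⟫_ℝ = ‖K.starProjection x‖ ^ 2 - ‖x - K.starProjection x‖ ^ 2 := by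
  set a := K.starProjection x
  calc ⟪K.reflection x, x⟫_ℝ = ⟪a - (x - a), a + (x - a)⟫_ℝ := by
        rw [reflection_apply, add_sub_cancel]; congr 1; module
    _ = ‖a‖ ^ 2 - ‖x - a‖ ^ 2 := by
        rw [inner_sub_left, inner_add_right, inner_add_right, real_inner_self_eq_norm_sq,
          real_inner_self_eq_norm_sq, real_inner_comm a]
        ring

theorem mem_dominatingCone_iff_inner_reflection_pos {x : E} :
    x ∈ K.dominatingCone ↔ 0 < ⟪K.reflection x, x⟫_ℝ := by
  rw [inner_reflection_self, sub_pos, sq_lt_sq₀ (norm_nonneg _) (norm_nonneg _)]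
  rfl

theorem mem_orthogonal_dominatingCone_iff_inner_reflection_neg {x : E} :
    x ∈ Kᗮ.dominatingCone ↔ ⟪K.reflection x, x⟫_ℝ < 0 := by
  rw [mem_dominatingCone_iff_inner_reflection_pos, reflection_orthogonal_apply, inner_neg_left,
    neg_pos]

theorem exists_joinedIn_dominatingCone_vadd_diff_closedBall (hK : 1 < Module.rank ℝ K)
    {v y : E} {R : ℝ} (hy : y ∈ {w | w - v ∈ K.dominatingCone} \ closedBall 0 R) (ρ : ℝ) :
    ∃ c ∈ K, ρ < ‖c‖ ∧ JoinedIn ({w | w - v ∈ K.dominatingCone} \ closedBall 0 R) (v + c) y := by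
  obtain ⟨hy, hyR⟩ := hy
  simp only [mem_closedBall_zero_iff, not_le] at hyR
  set a := K.starProjection (y - v)
  set b := y - v - a
  have ha : a ∈ K := K.starProjection_apply_mem _
  have hb : b ∈ Kᗮ := K.sub_starProjection_mem_orthogonal _
  have hab : ‖b‖ < ‖a‖ := hy
  obtain ⟨w, hwK, hw, haw, hyw⟩ := K.exists_norm_eq_one_inner_eq_zero_inner_nonneg hK ha y
  set T := |ρ| + |R| + ‖v‖ + ‖b‖ + 1 with hT_def
  have hT : 0 ≤ T := by positivity
  have ha_le : ∀ t : ℝ, 0 ≤ t → ‖a‖ ≤ ‖a + t • w‖ := fun t ht =>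
    norm_le_norm_add_smul_of_inner_nonneg haw.ge ht
  set c := a + T • w
  have hcK : c ∈ K := K.add_mem ha (K.smul_mem T hwK)
  have hc : T ≤ ‖c‖ := by
    have := norm_le_norm_add_smul_of_inner_nonneg (x := T • w) (d := a)
      (by rw [real_inner_smul_left, real_inner_comm, haw, mul_zero]) zero_le_one
    rwa [one_smul, add_comm, norm_smul, hw, mul_one, Real.norm_of_nonneg hT] at this
  have step₁ : JoinedIn ({w | w - v ∈ K.dominatingCone} \ closedBall 0 R) (v + c) (v + c + b) := by
    refine JoinedIn.of_forall_add_smul_mem fun θ hθ => ?_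
    have hθb : ‖θ • b‖ ≤ ‖b‖ := by
      rw [norm_smul, Real.norm_of_nonneg hθ.1]
      exact mul_le_of_le_one_left (norm_nonneg b) hθ.2
    refine ⟨?_, ?_⟩
    · show v + c + θ • b - v ∈ K.dominatingCone
      rw [show v + c + θ • b - v = c + θ • b by abel,
        add_mem_dominatingCone_iff hcK (Kᗮ.smul_mem θ hb)]
      exact hθb.trans_lt (hab.trans_le (ha_le T hT))
    · simp only [mem_closedBall_zero_iff, not_le]
      have := norm_sub_le (v + c + θ • b) (v + θ • b)
      rw [show v + c + θ • b - (v + θ • b) = c by abel] at this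
      linarith [norm_add_le v (θ • b), le_abs_self R, abs_nonneg ρ]
  have step₂ : JoinedIn ({w | w - v ∈ K.dominatingCone} \ closedBall 0 R) y (y + T • w) := by
    refine JoinedIn.of_forall_add_smul_mem fun θ hθ => ⟨?_, ?_⟩
    · show y + θ • T • w - v ∈ K.dominatingCone
      have : y + θ • T • w - v = a + (θ * T) • w + b := by simp only [b, smul_smul]; abel
      rw [this, add_mem_dominatingCone_iff (K.add_mem ha (K.smul_mem _ hwK)) hb]
      exact hab.trans_le (ha_le _ (mul_nonneg hθ.1 hT))
    · simp only [mem_closedBall_zero_iff, not_le, smul_smul]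
      exact hyR.trans_le (norm_le_norm_add_smul_of_inner_nonneg hyw (mul_nonneg hθ.1 hT))
  have hend : v + c + b = y + T • w := by simp only [c, b]; abel
  refine ⟨c, hcK, ?_, step₁.trans (hend ▸ step₂.symm)⟩
  linarith [le_abs_self ρ, abs_nonneg R, norm_nonneg v, norm_nonneg b]

theorem isPathConnected_dominatingCone_vadd_diff_closedBall (hK : 1 < Module.rank ℝ K)
    (v : E) (R : ℝ) :
    IsPathConnected ({w | w - v ∈ K.dominatingCone} \ closedBall 0 R) := by
  set ρ := |R| + ‖v‖
  have hρ : 0 ≤ ρ := by positivity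
  have hfar : IsPathConnected ((v + ·) '' (K.subtype '' (closedBall (0 : K) ρ)ᶜ)) :=
    ((isPathConnected_compl_closedBall_zero hK hρ).image K.subtypeL.continuous).image
      (continuous_const_add v)
  refine hfar.of_subset_of_forall_joinedIn ?_ fun y hy => ?_
  · rintro _ ⟨_, ⟨c, hc, rfl⟩, rfl⟩
    simp only [mem_compl_iff, mem_closedBall_zero_iff, not_le] at hc
    refine ⟨?_, ?_⟩
    · have := (add_mem_dominatingCone_iff c.2 (zero_mem Kᗮ)).2 (by simpa using hρ.trans_lt hc)
      simpa using this
    · simp only [mem_closedBall_zero_iff, not_le, subtype_apply]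
      have := norm_sub_norm_le (c : E) (-v)
      rw [norm_neg, sub_neg_eq_add, add_comm, norm_coe] at this
      linarith [le_abs_self R]
  obtain ⟨c, hcK, hc, hcy⟩ := exists_joinedIn_dominatingCone_vadd_diff_closedBall hK hy ρ
  refine ⟨v + c, ⟨c, ⟨⟨c, hcK⟩, ?_, rfl⟩, rfl⟩, hcy⟩
  simpa using hc

end Submodule

theorem exists_joinedIn_halfSpace_diff_closedBall (hE : 1 < Module.rank ℝ E) {c : E}
    (hc : c ≠ 0) {α R : ℝ} {y : E} (hy : y ∈ {u | α < ⟪c, u⟫_ℝ} \ closedBall 0 R) (β : ℝ) :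
    ∃ z, β < ⟪c, z⟫_ℝ ∧ JoinedIn ({u | α < ⟪c, u⟫_ℝ} \ closedBall 0 R) y z := by
  obtain ⟨hyα : α < ⟪c, y⟫_ℝ, hyR⟩ := hy
  simp only [mem_closedBall_zero_iff, not_le] at hyR
  have hcc : 0 < ⟪c, c⟫_ℝ := real_inner_self_pos.2 hc
  obtain ⟨e, -, he, hce, hye⟩ := (⊤ : Submodule ℝ E).exists_norm_eq_one_inner_eq_zero_inner_nonneg
    (by rwa [rank_top]) (Submodule.mem_top (x := c)) y
  set T := |R| + 1 with hT_def
  have hT : 0 ≤ T := by positivity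
  set S := (|β - ⟪c, y⟫_ℝ| + 1) / ⟪c, c⟫_ℝ
  have hS : 0 ≤ S := by positivity
  have hc_inner : ∀ s t : ℝ, ⟪c, y + s • e + t • c⟫_ℝ = ⟪c, y⟫_ℝ + t * ⟪c, c⟫_ℝ := by
    intro s t
    simp only [inner_add_right, real_inner_smul_right, hce]
    ring
  have step₁ : JoinedIn ({u | α < ⟪c, u⟫_ℝ} \ closedBall 0 R) y (y + T • e) := by
    refine JoinedIn.of_forall_add_smul_mem fun θ hθ => ⟨?_, ?_⟩
    · show α < ⟪c, y + θ • T • e⟫_ℝ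
      simpa [inner_add_right, real_inner_smul_right, hce] using hyα
    · simp only [mem_closedBall_zero_iff, not_le, smul_smul]
      exact hyR.trans_le (norm_le_norm_add_smul_of_inner_nonneg hye (mul_nonneg hθ.1 hT))
  have step₂ : JoinedIn ({u | α < ⟪c, u⟫_ℝ} \ closedBall 0 R) (y + T • e)
      (y + T • e + S • c) := by
    refine JoinedIn.of_forall_add_smul_mem fun θ hθ => ⟨?_, ?_⟩
    · show α < ⟪c, y + T • e + θ • S • c⟫_ℝ
      rw [smul_smul, hc_inner]
      nlinarith [mul_nonneg (mul_nonneg hθ.1 hS) hcc.le]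
    · simp only [mem_closedBall_zero_iff, not_le, smul_smul]
      -- the `e`-component stays equal to `⟪y, e⟫ + T ≥ T > R`
      have h := real_inner_le_norm (y + T • e + (θ * S) • c) e
      rw [he, mul_one, inner_add_left, inner_add_left, real_inner_smul_left,
        real_inner_smul_left, real_inner_self_eq_norm_sq, he, real_inner_comm, hce] at h
      linarith [le_abs_self R, real_inner_comm y e]
  refine ⟨y + T • e + S • c, ?_, step₁.trans step₂⟩
  rw [hc_inner, div_mul_cancel₀ _ hcc.ne']
  linarith [le_abs_self (β - ⟪c, y⟫_ℝ)]

theorem isPathConnected_halfSpace_diff_closedBall (hE : 1 < Module.rank ℝ E) {c : E}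
    (hc : c ≠ 0) (α R : ℝ) : IsPathConnected ({u | α < ⟪c, u⟫_ℝ} \ closedBall 0 R) := by
  set β := max α (R * ‖c‖)
  have hcc : 0 < ⟪c, c⟫_ℝ := real_inner_self_pos.2 hc
  have hfar : IsPathConnected {u | β < ⟪c, u⟫_ℝ} := by
    refine (convex_halfSpace_gt (innerₛₗ ℝ c).isLinear β).isPathConnected
      ⟨((|β| + 1) / ⟪c, c⟫_ℝ) • c, ?_⟩
    show β < ⟪c, ((|β| + 1) / ⟪c, c⟫_ℝ) • c⟫_ℝ
    rw [real_inner_smul_right, div_mul_cancel₀ _ hcc.ne']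
    linarith [le_abs_self β]
  refine hfar.of_subset_of_forall_joinedIn (fun u (hu : β < ⟪c, u⟫_ℝ) => ⟨?_, ?_⟩) fun y hy => ?_
  · exact (le_max_left _ _).trans_lt hu
  · simp only [mem_closedBall_zero_iff, not_le]
    refine lt_of_mul_lt_mul_right ?_ (norm_nonneg c)
    calc R * ‖c‖ ≤ β := le_max_right _ _
      _ < ⟪c, u⟫_ℝ := hu
      _ ≤ ‖u‖ * ‖c‖ := by rw [mul_comm]; exact real_inner_le_norm c u
  obtain ⟨z, hz, hyz⟩ := exists_joinedIn_halfSpace_diff_closedBall hE hc hy β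
  exact ⟨z, hz, hyz.symm⟩

end InnerProductSpace

namespace EuclideanSpace

variable {ι : Type*}

def coordSubspace (s : Set ι) : Submodule ℝ (EuclideanSpace ℝ ι) where
  carrier := {x | ∀ i ∉ s, x i = 0}
  add_mem' hx hy i hi := by simp [hx i hi, hy i hi]
  zero_mem' _ _ := rfl
  smul_mem' c x hx i hi := by simp [hx i hi]

theorem single_mem_coordSubspace [DecidableEq ι] {s : Set ι} {i : ι} (hi : i ∈ s) :
    single i (1 : ℝ) ∈ coordSubspace s := fun j hj => by
  simp [show j ≠ i by rintro rfl; exact hj hi]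

theorem linearIndependent_single_pair [DecidableEq ι] {i j : ι} (hij : i ≠ j) :
    LinearIndependent ℝ ![single i (1 : ℝ), single j 1] := by
  refine LinearIndependent.pair_iff.2 fun s t hst => ⟨?_, ?_⟩
  · simpa [hij.symm] using congrArg (· i) hst
  · simpa [hij] using congrArg (· j) hst

variable [Fintype ι]

theorem starProjection_coordSubspace (s : Set ι) (x : EuclideanSpace ℝ ι) :
    (coordSubspace s).starProjection x = WithLp.toLp 2 (s.indicator x.ofLp) := by
  refine Submodule.eq_starProjection_of_mem_orthogonal'
    (z := WithLp.toLp 2 (sᶜ.indicator x.ofLp)) (fun i hi => by simp [hi]) ?_ ?_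
  · rw [Submodule.mem_orthogonal]
    intro u hu
    rw [PiLp.inner_apply]
    refine Finset.sum_eq_zero fun i _ => ?_
    by_cases hi : i ∈ s <;> simp [hi, hu i]
  · ext i
    by_cases hi : i ∈ s <;> simp [hi]

theorem single_mem_orthogonal_coordSubspace [DecidableEq ι] {s : Set ι} {i : ι} (hi : i ∉ s) :
    single i (1 : ℝ) ∈ (coordSubspace s)ᗮ := by
  rw [Submodule.mem_orthogonal]
  intro u hu
  simp [inner_single_right, hu i hi]

end EuclideanSpace

theorem formB_eq_inner_reflection (p q : ℕ) (x y : EuclideanSpace ℝ (Fin (p + q))) :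
    formB p q x y =
      ⟪(EuclideanSpace.coordSubspace {i : Fin (p + q) | p ≤ (i : ℕ)}).reflection x, y⟫_ℝ := by
  rw [Submodule.reflection_apply, EuclideanSpace.starProjection_coordSubspace, PiLp.inner_apply,
    formB]
  refine Finset.sum_congr rfl fun i _ => ?_
  by_cases hi : (i : ℕ) < p
  · simp [hi, not_le.2 hi]; ring
  · simp [hi, not_lt.1 hi]; ring

theorem complement_of_ball_connected_general (p q : ℕ) (hp : 2 ≤ p) (hq : 2 ≤ q)
    (v : EuclideanSpace ℝ (Fin (p + q))) (R : ℝ) :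
    IsConnected ({w | formB p q (w - v) (w - v) > 0} \
      Metric.closedBall (0 : EuclideanSpace ℝ (Fin (p + q))) R) ∧
    IsConnected ({w | formB p q (w - v) (w - v) < 0} \
      Metric.closedBall (0 : EuclideanSpace ℝ (Fin (p + q))) R) ∧
    ∀ w₀ : EuclideanSpace ℝ (Fin (p + q)), w₀ ≠ 0 → formB p q w₀ w₀ = 0 → ∀ α : ℝ,
      IsConnected ({u | formB p q w₀ u > α} \
        Metric.closedBall (0 : EuclideanSpace ℝ (Fin (p + q))) R) := by
  open EuclideanSpace in
  set K := coordSubspace {i : Fin (p + q) | p ≤ (i : ℕ)}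
  have hK : 1 < Module.rank ℝ K := Submodule.one_lt_rank_of_linearIndependent
    (single_mem_coordSubspace (i := ⟨p, by omega⟩) (by simp))
    (single_mem_coordSubspace (i := ⟨p + 1, by omega⟩) (by simp))
    (linearIndependent_single_pair (by simp [Fin.ext_iff]))
  have hKperp : 1 < Module.rank ℝ Kᗮ := Submodule.one_lt_rank_of_linearIndependent
    (single_mem_orthogonal_coordSubspace (i := ⟨0, by omega⟩) (by simp; omega))
    (single_mem_orthogonal_coordSubspace (i := ⟨1, by omega⟩) (by simp; omega))
    (linearIndependent_single_pair (by simp [Fin.ext_iff]))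
  simp only [formB_eq_inner_reflection, gt_iff_lt,
    ← Submodule.mem_dominatingCone_iff_inner_reflection_pos,
    ← Submodule.mem_orthogonal_dominatingCone_iff_inner_reflection_neg]
  refine ⟨(K.isPathConnected_dominatingCone_vadd_diff_closedBall hK v R).isConnected,
    (Kᗮ.isPathConnected_dominatingCone_vadd_diff_closedBall hKperp v R).isConnected,
    fun w₀ hw₀ _ α => ?_⟩
  exact (isPathConnected_halfSpace_diff_closedBall (hK.trans_le (Submodule.rank_le K))
    (by simpa using hw₀) α R).isConnected

/-- For `p, q ≥ 2`, each of `(v + U_S) \ B(0,R)`, `(v + U_T) \ B(0,R)` and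
`H_{w₀,α} \ B(0,R)` (with `w₀` isotropic nonzero) is connected and nonempty, where
`B(0,R)` is the closed Euclidean ball of radius `R > 0`. -/
theorem complement_of_ball_connected (p q : ℕ) (hp : 2 ≤ p) (hq : 2 ≤ q)
    (v : EuclideanSpace ℝ (Fin (p + q))) (R : ℝ) (hR : 0 < R) :
    IsConnected ({w | formB p q (w - v) (w - v) > 0} \
      Metric.closedBall (0 : EuclideanSpace ℝ (Fin (p + q))) R) ∧
    IsConnected ({w | formB p q (w - v) (w - v) < 0} \
      Metric.closedBall (0 : EuclideanSpace ℝ (Fin (p + q))) R) ∧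
    ∀ w₀ : EuclideanSpace ℝ (Fin (p + q)), w₀ ≠ 0 → formB p q w₀ w₀ = 0 → ∀ α : ℝ,
      IsConnected ({u | formB p q w₀ u > α} \
        Metric.closedBall (0 : EuclideanSpace ℝ (Fin (p + q))) R) :=
  complement_of_ball_connected_general p q hp hq v R
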